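/- arXiv:2311.07521 — 2 statements merged into one kernel-verified Lean document; each statement's English description precedes it below -/
import Mathlib

section
/- For every a ∈ ℝ and every λ > 0, ∫₀^∞ e^{−λ t} · (2π t)^{−1/2} · exp(−a²/(2t)) dt = exp(−|a| √(2λ)) / √(2λ). -/
open MeasureTheory Real Set


lemma glasser_integrable (b : ℝ) :
    IntegrableOn (fun x : ℝ => Real.exp (-x ^ 2 - b ^ 2 / x ^ 2)) (Ioi 0) := by
  have hmeas : Measurable (fun x : ℝ => Real.exp (-x ^ 2 - b ^ 2 / x ^ 2)) := by
    measurability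
  refine ((integrable_exp_neg_mul_sq one_pos).integrableOn.mono'
    hmeas.aestronglyMeasurable ?_)
  filter_upwards with x
  rw [Real.norm_eq_abs, abs_of_pos (Real.exp_pos _)]
  apply Real.exp_le_exp.2
  have : 0 ≤ b ^ 2 / x ^ 2 := by positivity
  linarith

lemma glasser (b : ℝ) (hb : 0 ≤ b) :
    ∫ x in Ioi (0 : ℝ), Real.exp (-x ^ 2 - b ^ 2 / x ^ 2)
      = Real.sqrt Real.pi / 2 * Real.exp (-2 * b) := by
  rcases eq_or_lt_of_le hb with rfl | hb
  · have : ∫ x in Ioi (0 : ℝ), Real.exp (-x ^ 2 - (0:ℝ) ^ 2 / x ^ 2)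
        = ∫ x in Ioi (0 : ℝ), Real.exp (-1 * x ^ 2) := by
      apply setIntegral_congr_fun measurableSet_Ioi
      intro x hx
      norm_num
    rw [this, integral_gaussian_Ioi]
    norm_num
  -- b > 0 case
  set I := ∫ x in Ioi (0 : ℝ), Real.exp (-x ^ 2 - b ^ 2 / x ^ 2) with hI
  -- substitution x ↦ b / x
  have himg1 : (fun x : ℝ => b / x) '' Ioi 0 = Ioi 0 := by
    ext y
    constructor
    · rintro ⟨x, hx, rfl⟩
      exact div_pos hb hx
    · intro hy
      exact ⟨b / y, div_pos hb hy, by field_simp⟩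
  have hderiv1 : ∀ x ∈ Ioi (0:ℝ), HasDerivWithinAt (fun x : ℝ => b / x)
      (-(b / x ^ 2)) (Ioi 0) x := by
    intro x hx
    have : HasDerivAt (fun x : ℝ => b / x) (-(b / x ^ 2)) x := by
      simpa [div_eq_mul_inv, sq] using (hasDerivAt_inv (ne_of_gt hx)).const_mul b
    exact this.hasDerivWithinAt
  have hinj1 : InjOn (fun x : ℝ => b / x) (Ioi 0) := by
    intro x hx y hy h
    simp only at h
    rw [div_eq_div_iff (ne_of_gt hx) (ne_of_gt hy)] at h
    exact mul_left_cancel₀ (ne_of_gt hb) h.symm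
  have hsub1 : I = ∫ x in Ioi (0:ℝ), (b / x ^ 2) * Real.exp (-x ^ 2 - b ^ 2 / x ^ 2) := by
    calc I = ∫ x in (fun x : ℝ => b / x) '' Ioi 0, Real.exp (-x ^ 2 - b ^ 2 / x ^ 2) := by
            rw [himg1]
      _ = ∫ x in Ioi (0:ℝ), |(-(b / x ^ 2))| •
            Real.exp (-(b / x) ^ 2 - b ^ 2 / (b / x) ^ 2) := by
            exact integral_image_eq_integral_abs_deriv_smul measurableSet_Ioi hderiv1 hinj1 _
      _ = ∫ x in Ioi (0:ℝ), (b / x ^ 2) * Real.exp (-x ^ 2 - b ^ 2 / x ^ 2) := by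
            apply setIntegral_congr_fun measurableSet_Ioi
            intro x hx
            have hx0 : x ≠ 0 := ne_of_gt hx
            have h1 : b ^ 2 / (b / x) ^ 2 = x ^ 2 := by
              field_simp
            have h3 : -(b / x) ^ 2 - b ^ 2 / (b / x) ^ 2 = -x ^ 2 - b ^ 2 / x ^ 2 := by
              rw [h1]; field_simp; ring
            simp only [smul_eq_mul, abs_neg, abs_of_pos (show (0:ℝ) < b / x ^ 2 by positivity),
              h3]
  -- integrability of the transformed integrand
  have h2int : IntegrableOn (fun x : ℝ => (b / x ^ 2) * Real.exp (-x ^ 2 - b ^ 2 / x ^ 2))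
      (Ioi 0) := by
    have key := (integrableOn_image_iff_integrableOn_abs_deriv_smul measurableSet_Ioi hderiv1
      hinj1 (fun x => Real.exp (-x ^ 2 - b ^ 2 / x ^ 2))).1 (by rw [himg1]; exact glasser_integrable b)
    refine key.congr_fun ?_ measurableSet_Ioi
    intro x hx
    have hx0 : x ≠ 0 := ne_of_gt hx
    have h1 : b ^ 2 / (b / x) ^ 2 = x ^ 2 := by field_simp
    have h3 : -(b / x) ^ 2 - b ^ 2 / (b / x) ^ 2 = -x ^ 2 - b ^ 2 / x ^ 2 := by
      rw [h1]; field_simp; ring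
    simp only [smul_eq_mul, abs_neg, abs_of_pos (show (0:ℝ) < b / x ^ 2 by positivity), h3]
  -- second substitution x ↦ x - b / x
  have hderiv2 : ∀ x ∈ Ioi (0:ℝ), HasDerivWithinAt (fun x : ℝ => x - b / x)
      (1 + b / x ^ 2) (Ioi 0) x := by
    intro x hx
    have : HasDerivAt (fun x : ℝ => x - b / x) (1 + b / x ^ 2) x := by
      have h1 := (hasDerivAt_id' x).sub ((hasDerivAt_inv (ne_of_gt hx)).const_mul b)
      simpa [div_eq_mul_inv, sq, sub_neg_eq_add, Pi.sub_def] using h1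
    exact this.hasDerivWithinAt
  have hinj2 : InjOn (fun x : ℝ => x - b / x) (Ioi 0) := by
    intro x hx y hy h
    simp only at h
    rw [Set.mem_Ioi] at hx hy
    have hx0 : x ≠ 0 := ne_of_gt hx
    have hy0 : y ≠ 0 := ne_of_gt hy
    field_simp at h
    have h0 : (x - y) * (x * y + b) = 0 := by linear_combination h
    rcases mul_eq_zero.mp h0 with h1 | h1
    · linarith
    · nlinarith [mul_pos hx hy]
  have himg2 : (fun x : ℝ => x - b / x) '' Ioi 0 = Set.univ := by
    apply Set.eq_univ_of_forall
    intro u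
    set s := Real.sqrt (u ^ 2 + 4 * b) with hs
    have hs2 : s ^ 2 = u ^ 2 + 4 * b := Real.sq_sqrt (by positivity)
    have hsu : |u| < s := by
      rw [hs, ← Real.sqrt_sq_eq_abs]
      exact Real.sqrt_lt_sqrt (sq_nonneg u) (by linarith)
    have hxpos : 0 < (u + s) / 2 := by
      have := neg_abs_le u
      linarith
    refine ⟨(u + s) / 2, hxpos, ?_⟩
    show (u + s) / 2 - b / ((u + s) / 2) = u
    have hne : u + s ≠ 0 := ne_of_gt (by linarith)
    field_simp
    linear_combination hs2
  -- put it together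
  have hsum : Real.sqrt Real.pi = Real.exp (2 * b) * (2 * I) := by
    calc Real.sqrt Real.pi = ∫ u : ℝ, Real.exp (-1 * u ^ 2) := by
          rw [integral_gaussian]; norm_num
      _ = ∫ u in (fun x : ℝ => x - b / x) '' Ioi 0, Real.exp (-1 * u ^ 2) := by
          rw [himg2, setIntegral_univ]
      _ = ∫ x in Ioi (0:ℝ), |1 + b / x ^ 2| • Real.exp (-1 * (x - b / x) ^ 2) :=
          integral_image_eq_integral_abs_deriv_smul measurableSet_Ioi hderiv2 hinj2 _
      _ = ∫ x in Ioi (0:ℝ), Real.exp (2 * b) *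
            (Real.exp (-x ^ 2 - b ^ 2 / x ^ 2)
              + (b / x ^ 2) * Real.exp (-x ^ 2 - b ^ 2 / x ^ 2)) := by
          apply setIntegral_congr_fun measurableSet_Ioi
          intro x hx
          have hx0 : x ≠ 0 := ne_of_gt hx
          have harg : -1 * (x - b / x) ^ 2 = (-x ^ 2 - b ^ 2 / x ^ 2) + 2 * b := by
            field_simp; ring
          simp only [smul_eq_mul, abs_of_pos (show (0:ℝ) < 1 + b / x ^ 2 by positivity), harg,
            Real.exp_add]
          ring
      _ = Real.exp (2 * b) * (2 * I) := by
          rw [MeasureTheory.integral_const_mul, MeasureTheory.integral_add (glasser_integrable b) h2int,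
            ← hI, ← hsub1]
          ring
  have hE : Real.exp (2 * b) ≠ 0 := (Real.exp_pos _).ne'
  rw [show (-2 : ℝ) * b = -(2 * b) by ring, Real.exp_neg]
  field_simp
  linarith [hsum]

/-- Laplace transform in time of the one-dimensional Gaussian heat kernel:
`∫₀^∞ e^{-λ t} (2π t)^{-1/2} e^{-a²/(2t)} dt = e^{-|a| √(2λ)} / √(2λ)`. -/
theorem laplace_heat_kernel (a l : ℝ) (hl : 0 < l) :
    ∫ t in Set.Ioi (0 : ℝ),
        Real.exp (-l * t) * ((2 * Real.pi * t) ^ (-(1 : ℝ) / 2) * Real.exp (-a ^ 2 / (2 * t)))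
      = Real.exp (-|a| * Real.sqrt (2 * l)) / Real.sqrt (2 * l) := by
  have hl0 : l ≠ 0 := ne_of_gt hl
  have hpi : (0:ℝ) < Real.pi := Real.pi_pos
  set b : ℝ := |a| * Real.sqrt (l / 2) with hbdef
  have hb : 0 ≤ b := by positivity
  have hb2 : b ^ 2 = a ^ 2 * l / 2 := by
    rw [hbdef, mul_pow, sq_abs, Real.sq_sqrt (by positivity : (0:ℝ) ≤ l / 2)]
    ring
  -- substitution t = x^2 / l
  have hderiv3 : ∀ x ∈ Set.Ioi (0:ℝ), HasDerivWithinAt (fun x : ℝ => x ^ 2 / l)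
      (2 * x / l) (Set.Ioi 0) x := by
    intro x hx
    have : HasDerivAt (fun x : ℝ => x ^ 2 / l) (2 * x / l) x := by
      simpa [mul_comm] using (hasDerivAt_pow 2 x).div_const l
    exact this.hasDerivWithinAt
  have hinj3 : Set.InjOn (fun x : ℝ => x ^ 2 / l) (Set.Ioi 0) := by
    intro x hx y hy h
    simp only at h
    rw [Set.mem_Ioi] at hx hy
    field_simp at h
    exact le_antisymm (by nlinarith) (by nlinarith)
  have himg3 : (fun x : ℝ => x ^ 2 / l) '' Set.Ioi 0 = Set.Ioi 0 := by
    ext y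
    constructor
    · rintro ⟨x, hx, rfl⟩
      exact div_pos (pow_pos hx 2) hl
    · intro hy
      rw [Set.mem_Ioi] at hy
      refine ⟨Real.sqrt (l * y), Real.sqrt_pos.2 (by positivity), ?_⟩
      simp only
      rw [Real.sq_sqrt (by positivity : (0:ℝ) ≤ l * y)]
      field_simp
  set C : ℝ := 2 / (l * Real.sqrt (2 * Real.pi / l)) with hCdef
  have hsub : (∫ t in Set.Ioi (0 : ℝ),
        Real.exp (-l * t) * ((2 * Real.pi * t) ^ (-(1 : ℝ) / 2) * Real.exp (-a ^ 2 / (2 * t))))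
      = ∫ x in Set.Ioi (0:ℝ), C * Real.exp (-x ^ 2 - b ^ 2 / x ^ 2) := by
    calc (∫ t in Set.Ioi (0 : ℝ),
        Real.exp (-l * t) * ((2 * Real.pi * t) ^ (-(1 : ℝ) / 2) * Real.exp (-a ^ 2 / (2 * t))))
        = ∫ t in (fun x : ℝ => x ^ 2 / l) '' Set.Ioi 0,
            Real.exp (-l * t) * ((2 * Real.pi * t) ^ (-(1 : ℝ) / 2)
              * Real.exp (-a ^ 2 / (2 * t))) := by rw [himg3]
      _ = ∫ x in Set.Ioi (0:ℝ), |2 * x / l| •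
            (Real.exp (-l * (x ^ 2 / l)) * ((2 * Real.pi * (x ^ 2 / l)) ^ (-(1 : ℝ) / 2)
              * Real.exp (-a ^ 2 / (2 * (x ^ 2 / l))))) :=
          MeasureTheory.integral_image_eq_integral_abs_deriv_smul measurableSet_Ioi hderiv3 hinj3 _
      _ = ∫ x in Set.Ioi (0:ℝ), C * Real.exp (-x ^ 2 - b ^ 2 / x ^ 2) := by
          apply setIntegral_congr_fun measurableSet_Ioi
          intro x hx
          rw [Set.mem_Ioi] at hx
          have hx0 : x ≠ 0 := ne_of_gt hx
          have e1 : -l * (x ^ 2 / l) = -x ^ 2 := by field_simp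
          have e2 : (2 * Real.pi * (x ^ 2 / l)) ^ (-(1 : ℝ) / 2)
              = (Real.sqrt (2 * Real.pi / l) * x)⁻¹ := by
            have hy : (0:ℝ) < 2 * Real.pi * (x ^ 2 / l) := by positivity
            rw [show (-(1:ℝ) / 2) = -(1/2 : ℝ) by norm_num,
              Real.rpow_neg hy.le, ← Real.sqrt_eq_rpow,
              show 2 * Real.pi * (x ^ 2 / l) = (2 * Real.pi / l) * x ^ 2 by ring,
              Real.sqrt_mul (by positivity : (0:ℝ) ≤ 2 * Real.pi / l),
              Real.sqrt_sq hx.le]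
          have e3 : -a ^ 2 / (2 * (x ^ 2 / l)) = -b ^ 2 / x ^ 2 := by
            rw [hb2, div_eq_div_iff (by positivity : (0:ℝ) < 2 * (x ^ 2 / l)).ne'
              (by positivity : (0:ℝ) < x ^ 2).ne']
            field_simp
          have hs : (0:ℝ) < Real.sqrt (2 * Real.pi / l) := Real.sqrt_pos.2 (by positivity)
          have hcx : 2 * x / l * (Real.sqrt (2 * Real.pi / l) * x)⁻¹ = C := by
            rw [hCdef]; field_simp
          simp only [smul_eq_mul, e1, e2, e3,
            abs_of_pos (show (0:ℝ) < 2 * x / l by positivity)]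
          rw [show -x ^ 2 - b ^ 2 / x ^ 2 = -x ^ 2 + (-b ^ 2 / x ^ 2) by ring, Real.exp_add,
            ← hcx]
          ring
  rw [hsub, MeasureTheory.integral_const_mul, glasser b hb]
  -- final algebra
  have h2b : 2 * b = |a| * Real.sqrt (2 * l) := by
    rw [hbdef, show (2:ℝ) * l = 4 * (l / 2) by ring,
      Real.sqrt_mul (by norm_num : (0:ℝ) ≤ 4),
      show Real.sqrt 4 = 2 by rw [show (4:ℝ) = 2 ^ 2 by norm_num, Real.sqrt_sq (by norm_num : (0:ℝ) ≤ 2)]]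
    ring
  have hexp : Real.exp (-2 * b) = Real.exp (-|a| * Real.sqrt (2 * l)) := by
    rw [show -2 * b = -(2 * b) by ring, h2b]; ring_nf
  have hsl : (0:ℝ) < Real.sqrt l := Real.sqrt_pos.2 hl
  have hll : Real.sqrt l * Real.sqrt l = l := Real.mul_self_sqrt hl.le
  have hspi : (0:ℝ) < Real.sqrt Real.pi := Real.sqrt_pos.2 hpi
  have hs2 : (0:ℝ) < Real.sqrt 2 := Real.sqrt_pos.2 (by norm_num)
  have hpp : Real.sqrt Real.pi * Real.sqrt Real.pi = Real.pi := Real.mul_self_sqrt hpi.le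
  have h22 : Real.sqrt 2 * Real.sqrt 2 = 2 := Real.mul_self_sqrt (by norm_num)
  have hsplit : Real.sqrt (2 * Real.pi / l) = Real.sqrt 2 * Real.sqrt Real.pi / Real.sqrt l := by
    rw [Real.sqrt_div (by positivity : (0:ℝ) ≤ 2 * Real.pi) l,
      Real.sqrt_mul (by norm_num : (0:ℝ) ≤ 2)]
  have hs2l : Real.sqrt (2 * l) = Real.sqrt 2 * Real.sqrt l :=
    Real.sqrt_mul (by norm_num) l
  have hCeq : C = 2 / ((Real.sqrt l * Real.sqrt l) * (Real.sqrt 2 * Real.sqrt Real.pi / Real.sqrt l)) := by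
    rw [hCdef, hsplit, hll]
  have hcoef : C * (Real.sqrt Real.pi / 2) = (Real.sqrt (2 * l))⁻¹ := by
    rw [hCeq, hs2l]
    field_simp
  calc C * (Real.sqrt Real.pi / 2 * Real.exp (-2 * b))
      = C * (Real.sqrt Real.pi / 2) * Real.exp (-2 * b) := by ring
    _ = (Real.sqrt (2 * l))⁻¹ * Real.exp (-|a| * Real.sqrt (2 * l)) := by rw [hcoef, hexp]
    _ = Real.exp (-|a| * Real.sqrt (2 * l)) / Real.sqrt (2 * l) := by
        rw [inv_mul_eq_div]
end

section
/- Let λ > 0, x ≥ 0, and let φ : (0,∞) → ℝ be measurable, bounded and integrable. Then ∫₀^∞ e^{−λ t} ( ∫₀^∞ [g_t(x−y) − g_t(x+y)] φ(y) dy ) dt = (1/√(2λ)) ∫₀^∞ [ e^{−|x−y|√(2λ)} − e^{−(x+y)√(2λ)} ] φ(y) dy, where g_t(z) = (2π t)^{−1/2} exp(−z²/(2t)). -/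
open MeasureTheory Real Set

lemma glasser_pos (a c : ℝ) (ha : 0 < a) (hc : 0 < c) :
    ∫ u in Ioi (0:ℝ), Real.exp (-(a*u^2 + c^2/u^2))
      = Real.sqrt π / (2 * Real.sqrt a) * Real.exp (-(2*c*Real.sqrt a)) := by
  set s := Real.sqrt a with hs_def
  have hs : 0 < s := Real.sqrt_pos.mpr ha
  have hs2 : s^2 = a := Real.sq_sqrt ha.le
  set w : ℝ → ℝ := fun u => s*u - c/u with hw_def
  set w' : ℝ → ℝ := fun u => s + c/u^2 with hw'_def
  -- derivative
  have hderiv : ∀ u ∈ Ioi (0:ℝ), HasDerivWithinAt w (w' u) (Ioi 0) u := by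
    intro u hu
    have hu0 : u ≠ 0 := ne_of_gt hu
    have : HasDerivAt w (s * 1 - c * (-(u^2)⁻¹)) u := by
      have h := ((hasDerivAt_id u).const_mul s).sub ((hasDerivAt_inv hu0).const_mul c)
      have e : w = (fun y => s * id y) - fun y => c * y⁻¹ := by
        funext y; simp [hw_def, div_eq_mul_inv]
      rw [e]; exact h
    have heq : s * 1 - c * (-(u^2)⁻¹) = w' u := by
      simp [hw'_def, div_eq_mul_inv]
    exact (heq ▸ this).hasDerivWithinAt
  -- injectivity
  have hmono : StrictMonoOn w (Ioi 0) := by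
    intro u hu v hv huv
    simp only [hw_def]
    have h1 : s*u < s*v := by nlinarith [mem_Ioi.mp hu]
    have h2 : c/v < c/u := by
      apply div_lt_div_of_pos_left hc (mem_Ioi.mp hu) huv
    linarith
  have hinj : InjOn w (Ioi 0) := hmono.injOn
  -- image = univ
  have himg : w '' (Ioi 0) = univ := by
    apply eq_univ_of_forall
    intro v
    set S := Real.sqrt (v^2 + 4*s*c) with hS
    have hS2 : S^2 = v^2 + 4*s*c := Real.sq_sqrt (by positivity)
    have hSv : |v| < S := by
      rw [← Real.sqrt_sq_eq_abs]
      exact Real.sqrt_lt_sqrt (by positivity) (by nlinarith)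
    have hv : -v ≤ |v| := neg_le_abs v
    have hvS : 0 < v + S := by linarith
    have hu : 0 < (v + S) / (2*s) := div_pos hvS (by linarith)
    refine ⟨(v + S)/(2*s), mem_Ioi.mpr hu, ?_⟩
    simp only [hw_def]
    rw [div_div_eq_mul_div, eq_comm, eq_sub_iff_add_eq]
    field_simp
    ring_nf
    nlinarith [hS2]
  -- step A: change of variables for w
  have hA : ∫ u in Ioi (0:ℝ), |w' u| * Real.exp (-(w u)^2) = Real.sqrt π := by
    have := integral_image_eq_integral_abs_deriv_smul measurableSet_Ioi hderiv hinj
      (fun v => Real.exp (-v^2))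
    rw [himg] at this
    simp only [smul_eq_mul] at this
    rw [← this]
    rw [Measure.restrict_univ]
    simpa using integral_gaussian 1
  -- integrability of |w'| * g
  have hIw : IntegrableOn (fun u => |w' u| * Real.exp (-(w u)^2)) (Ioi 0) := by
    have := (integrableOn_image_iff_integrableOn_abs_deriv_smul measurableSet_Ioi hderiv hinj
      (fun v => Real.exp (-v^2))).mp ?_
    · simpa [smul_eq_mul] using this
    · rw [himg]
      rw [IntegrableOn, Measure.restrict_univ]
      simpa using integrable_exp_neg_mul_sq (one_pos)
  have hwmeas : Measurable w := by
    apply Measurable.sub (measurable_const.mul measurable_id)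
    exact measurable_const.div measurable_id
  have hgmeas : Measurable (fun u => Real.exp (-(w u)^2)) := by
    exact (((hwmeas.pow_const 2).neg).exp)
  have hw'pos : ∀ u ∈ Ioi (0:ℝ), 0 < w' u := by
    intro u hu
    have hu' : (0:ℝ) < u := hu
    have : (0:ℝ) < c / u^2 := div_pos hc (pow_pos hu' 2)
    simp only [hw'_def]; linarith
  -- integrability of g
  have hIg : IntegrableOn (fun u => Real.exp (-(w u)^2)) (Ioi 0) := by
    apply Integrable.mono' (hIw.const_mul s⁻¹) hgmeas.aestronglyMeasurable.restrict
    filter_upwards [ae_restrict_mem measurableSet_Ioi] with u hu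
    have hu' : (0:ℝ) < u := hu
    have h1 := hw'pos u hu
    rw [Real.norm_eq_abs, abs_of_nonneg (Real.exp_pos _).le]
    rw [abs_of_pos h1]
    have h2 : s ≤ w' u := by
      have : (0:ℝ) ≤ c / u^2 := le_of_lt (div_pos hc (pow_pos hu' 2))
      simp only [hw'_def]; linarith
    have h3 := (Real.exp_pos (-(w u)^2)).le
    calc Real.exp (-(w u)^2) = s⁻¹ * (s * Real.exp (-(w u)^2)) := by field_simp
      _ ≤ s⁻¹ * (w' u * Real.exp (-(w u)^2)) :=
          mul_le_mul_of_nonneg_left (mul_le_mul_of_nonneg_right h2 h3) (inv_nonneg.mpr hs.le)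
  -- integrability of (c/u^2) * g
  have hIg2 : IntegrableOn (fun u => c/u^2 * Real.exp (-(w u)^2)) (Ioi 0) := by
    apply Integrable.mono' hIw
    · exact ((measurable_const.div (measurable_id.pow_const 2)).mul
        hgmeas).aestronglyMeasurable.restrict
    filter_upwards [ae_restrict_mem measurableSet_Ioi] with u hu
    have h1 := hw'pos u hu
    have hu' : (0:ℝ) < u := hu
    have h4 : (0:ℝ) < c / u^2 := div_pos hc (pow_pos hu' 2)
    rw [Real.norm_eq_abs, abs_of_nonneg (by positivity), abs_of_pos h1]
    have h3 := (Real.exp_pos (-(w u)^2)).le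
    apply mul_le_mul_of_nonneg_right _ h3
    simp only [hw'_def]; linarith
  -- reflection: τ u = c/(s*u)
  have hrefl : ∫ u in Ioi (0:ℝ), c/u^2 * Real.exp (-(w u)^2)
      = s * ∫ u in Ioi (0:ℝ), Real.exp (-(w u)^2) := by
    set τ : ℝ → ℝ := fun u => c/(s*u) with hτ_def
    have hτderiv : ∀ u ∈ Ioi (0:ℝ), HasDerivWithinAt τ (-(c/s)/u^2) (Ioi 0) u := by
      intro u hu
      have hu0 : u ≠ 0 := ne_of_gt hu
      have : HasDerivAt τ ((c/s) * (-(u^2)⁻¹)) u := by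
        have h := (hasDerivAt_inv hu0).const_mul (c/s)
        have : τ = fun u => (c/s) * u⁻¹ := by
          funext u; simp only [hτ_def]; field_simp
        rw [this]; exact h
      have heq : (c/s) * (-(u^2)⁻¹) = -(c/s)/u^2 := by field_simp
      exact (heq ▸ this).hasDerivWithinAt
    have hτinj : InjOn τ (Ioi 0) := by
      intro u hu v hv huv
      simp only [hτ_def] at huv
      have hu0 : u ≠ 0 := ne_of_gt hu
      have hv0 : v ≠ 0 := ne_of_gt hv
      rw [div_eq_div_iff (mul_ne_zero hs.ne' hu0) (mul_ne_zero hs.ne' hv0)] at huv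
      have h := mul_left_cancel₀ hc.ne' huv
      exact (mul_left_cancel₀ hs.ne' h).symm
    have hτimg : τ '' (Ioi 0) = Ioi 0 := by
      apply Subset.antisymm
      · rintro _ ⟨u, hu, rfl⟩
        have hu' : (0:ℝ) < u := hu
        exact mem_Ioi.mpr (div_pos hc (by positivity))
      · intro v hv
        have hv0 : (0:ℝ) < v := hv
        refine ⟨c/(s*v), mem_Ioi.mpr (div_pos hc (by positivity)), ?_⟩
        simp only [hτ_def]
        field_simp
    have hτw : ∀ u ∈ Ioi (0:ℝ), w (τ u) = - (w u) := by
      intro u hu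
      have hu0 : u ≠ 0 := ne_of_gt hu
      simp only [hw_def, hτ_def]
      field_simp
      ring
    have := integral_image_eq_integral_abs_deriv_smul measurableSet_Ioi hτderiv hτinj
      (fun u => Real.exp (-(w u)^2))
    rw [hτimg] at this
    rw [this]
    rw [← integral_const_mul]
    apply setIntegral_congr_fun measurableSet_Ioi
    intro u hu
    have hu0 : (0:ℝ) < u := hu
    have hwt : w (τ u) = -(w u) := hτw u hu
    have habs : |(-(c/s)/u^2)| = (c/s)/u^2 := by
      rw [abs_div, abs_neg, abs_of_pos (div_pos hc hs), abs_of_pos (pow_pos hu0 2)]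
    simp only [smul_eq_mul]
    rw [hwt, habs, neg_sq]
    field_simp
  -- combine: sqrt π = 2 s ∫ g
  have hcomb : Real.sqrt π = 2 * s * ∫ u in Ioi (0:ℝ), Real.exp (-(w u)^2) := by
    rw [← hA]
    have : ∀ u ∈ Ioi (0:ℝ), |w' u| * Real.exp (-(w u)^2)
        = s * Real.exp (-(w u)^2) + c/u^2 * Real.exp (-(w u)^2) := by
      intro u hu
      rw [abs_of_pos (hw'pos u hu)]
      simp only [hw'_def]; ring
    rw [setIntegral_congr_fun measurableSet_Ioi this,
      integral_add (hIg.const_mul s) hIg2, integral_const_mul, hrefl]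
    ring
  -- final
  have hIgval : ∫ u in Ioi (0:ℝ), Real.exp (-(w u)^2) = Real.sqrt π / (2*s) := by
    rw [eq_div_iff (by positivity)]
    linarith [hcomb]
  have hptw : ∀ u ∈ Ioi (0:ℝ), Real.exp (-(a*u^2 + c^2/u^2))
      = Real.exp (-(2*c*s)) * Real.exp (-(w u)^2) := by
    intro u hu
    have hu0 : u ≠ 0 := ne_of_gt hu
    rw [← Real.exp_add]
    congr 1
    simp only [hw_def]
    rw [← hs2]
    field_simp
    ring
  rw [setIntegral_congr_fun measurableSet_Ioi hptw, integral_const_mul, hIgval]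
  ring

lemma glasser_s5 (a c : ℝ) (ha : 0 < a) (hc : 0 ≤ c) :
    ∫ u in Ioi (0:ℝ), Real.exp (-(a*u^2 + c^2/u^2))
      = Real.sqrt π / (2 * Real.sqrt a) * Real.exp (-(2*c*Real.sqrt a)) := by
  rcases eq_or_lt_of_le hc with h | h
  · subst h
    simp only [ne_eq, OfNat.ofNat_ne_zero, not_false_eq_true, zero_pow, zero_div, add_zero,
      mul_zero, zero_mul, Real.exp_zero, mul_one]
    have : ∀ u : ℝ, Real.exp (-(a*u^2)) = Real.exp (-a*u^2) := by intro u; ring_nf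
    simp_rw [this, integral_gaussian_Ioi]
    rw [neg_zero, Real.exp_zero, mul_one, Real.sqrt_div Real.pi_pos.le]
    ring
  · exact glasser_pos a c ha h

lemma heat_laplace (l z : ℝ) (hl : 0 < l) :
    ∫ t in Ioi (0:ℝ), Real.exp (-l * t) *
        ((2 * Real.pi * t) ^ (-(1:ℝ)/2) * Real.exp (-z^2 / (2*t)))
      = (1 / Real.sqrt (2*l)) * Real.exp (-|z| * Real.sqrt (2*l)) := by
  set f : ℝ → ℝ := fun t => Real.exp (-l * t) *
      ((2 * Real.pi * t) ^ (-(1:ℝ)/2) * Real.exp (-z^2 / (2*t))) with hf_def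
  -- substitution t = u^2
  have hσderiv : ∀ u ∈ Ioi (0:ℝ), HasDerivWithinAt (fun u : ℝ => u^2) (2*u) (Ioi 0) u := by
    intro u hu
    simpa [mul_comm] using (hasDerivAt_pow 2 u).hasDerivWithinAt
  have hσinj : InjOn (fun u : ℝ => u^2) (Ioi 0) := by
    intro u hu v hv huv
    simp only at huv
    nlinarith [mem_Ioi.mp hu, mem_Ioi.mp hv]
  have hσimg : (fun u : ℝ => u^2) '' (Ioi 0) = Ioi 0 := by
    apply Subset.antisymm
    · rintro _ ⟨u, hu, rfl⟩
      exact mem_Ioi.mpr (pow_pos (mem_Ioi.mp hu) 2)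
    · intro t ht
      exact ⟨Real.sqrt t, mem_Ioi.mpr (Real.sqrt_pos.mpr ht), Real.sq_sqrt (le_of_lt ht)⟩
  have hsub := integral_image_eq_integral_abs_deriv_smul measurableSet_Ioi hσderiv hσinj f
  rw [hσimg] at hsub
  rw [hsub]
  -- pointwise simplification
  have hptw : ∀ u ∈ Ioi (0:ℝ), |2*u| • f (u^2)
      = (2 / Real.sqrt (2*Real.pi)) * Real.exp (-(l*u^2 + (z^2/2)/u^2)) := by
    intro u hu
    have hu' : (0:ℝ) < u := hu
    have h2pi : (0:ℝ) < 2*Real.pi := by positivity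
    have hrpow : (2 * Real.pi * u^2) ^ (-(1:ℝ)/2)
        = (Real.sqrt (2*Real.pi))⁻¹ * u⁻¹ := by
      rw [Real.mul_rpow h2pi.le (by positivity)]
      congr 1
      · rw [show (-(1:ℝ)/2) = -(1/2) by ring, Real.rpow_neg h2pi.le,
          ← Real.sqrt_eq_rpow]
      · rw [show (-(1:ℝ)/2) = -(1/2) by ring, Real.rpow_neg (by positivity),
          ← Real.sqrt_eq_rpow, Real.sqrt_sq hu'.le]
    simp only [smul_eq_mul, hf_def]
    rw [hrpow, abs_of_pos (by positivity : (0:ℝ) < 2*u)]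
    rw [show (-(l * u ^ 2 + z ^ 2 / 2 / u ^ 2)) = -l*u^2 + -z^2/(2*u^2) by field_simp; ring,
      Real.exp_add]
    have hsq : Real.sqrt (2*Real.pi) ≠ 0 := by positivity
    field_simp
  rw [setIntegral_congr_fun measurableSet_Ioi hptw, integral_const_mul]
  have hc0 : (0:ℝ) ≤ |z| / Real.sqrt 2 := by positivity
  have hcsq : (|z| / Real.sqrt 2)^2 = z^2/2 := by
    rw [div_pow, sq_abs, Real.sq_sqrt (by norm_num : (0:ℝ) ≤ 2)]
  rw [← hcsq, glasser_s5 l (|z| / Real.sqrt 2) hl hc0]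
  have h2 : Real.sqrt (2*l) = Real.sqrt 2 * Real.sqrt l := Real.sqrt_mul (by norm_num) l
  have hs2 : (0:ℝ) < Real.sqrt 2 := by positivity
  have hsl : (0:ℝ) < Real.sqrt l := Real.sqrt_pos.mpr hl
  have h22 : 2 / Real.sqrt 2 = Real.sqrt 2 := by
    rw [div_eq_iff hs2.ne']
    exact (Real.mul_self_sqrt (by norm_num)).symm
  have hexp : -(2 * (|z| / Real.sqrt 2) * Real.sqrt l) = -|z| * Real.sqrt (2*l) := by
    calc -(2 * (|z| / Real.sqrt 2) * Real.sqrt l)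
        = -((2 / Real.sqrt 2) * |z| * Real.sqrt l) := by ring
      _ = -|z| * Real.sqrt (2*l) := by rw [h22, h2]; ring
  rw [hexp]
  have hcoef : 2 / Real.sqrt (2*Real.pi) * (Real.sqrt π / (2 * Real.sqrt l))
      = 1 / Real.sqrt (2*l) := by
    rw [h2, Real.sqrt_mul (by norm_num) π]
    have hpi : (0:ℝ) < Real.sqrt π := Real.sqrt_pos.mpr Real.pi_pos
    field_simp
  rw [← mul_assoc, hcoef]

lemma meas_rpow_half : Measurable fun x : ℝ => x ^ (-(1:ℝ)/2) := by measurability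

set_option maxHeartbeats 1000000 in
lemma heat_integrable (l z : ℝ) (hl : 0 < l) :
    IntegrableOn (fun t => Real.exp (-l * t) *
      ((2 * Real.pi * t) ^ (-(1:ℝ)/2) * Real.exp (-z^2 / (2*t)))) (Ioi 0) := by
  set f : ℝ → ℝ := fun t => Real.exp (-l * t) *
      ((2 * Real.pi * t) ^ (-(1:ℝ)/2) * Real.exp (-z^2 / (2*t))) with hf_def
  have hσderiv : ∀ u ∈ Ioi (0:ℝ), HasDerivWithinAt (fun u : ℝ => u^2) (2*u) (Ioi 0) u := by
    intro u hu
    simpa [mul_comm] using (hasDerivAt_pow 2 u).hasDerivWithinAt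
  have hσinj : InjOn (fun u : ℝ => u^2) (Ioi 0) := by
    intro u hu v hv huv
    simp only at huv
    nlinarith [mem_Ioi.mp hu, mem_Ioi.mp hv]
  have hσimg : (fun u : ℝ => u^2) '' (Ioi 0) = Ioi 0 := by
    apply Subset.antisymm
    · rintro _ ⟨u, hu, rfl⟩
      exact mem_Ioi.mpr (pow_pos (mem_Ioi.mp hu) 2)
    · intro t ht
      exact ⟨Real.sqrt t, mem_Ioi.mpr (Real.sqrt_pos.mpr ht), Real.sq_sqrt (le_of_lt ht)⟩
  have key := integrableOn_image_iff_integrableOn_abs_deriv_smul measurableSet_Ioi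
    hσderiv hσinj f
  rw [hσimg] at key
  rw [key]
  -- the substituted function is dominated by a Gaussian
  have hbound : IntegrableOn (fun u => (2 / Real.sqrt (2*Real.pi)) * Real.exp (-l*u^2))
      (Ioi 0) := ((integrable_exp_neg_mul_sq hl).const_mul _).integrableOn
  apply Integrable.mono' hbound
  · apply Measurable.aestronglyMeasurable
    simp only [smul_eq_mul, hf_def]
    exact ((measurable_const.mul measurable_id).abs).mul
      ((((measurable_id.pow_const 2).const_mul (-l)).exp).mul
        ((meas_rpow_half.comp ((measurable_id.pow_const 2).const_mul (2*Real.pi))).mul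
          ((measurable_const.div ((measurable_id.pow_const 2).const_mul 2)).exp)))
  filter_upwards [ae_restrict_mem measurableSet_Ioi] with u hu
  have hu' : (0:ℝ) < u := hu
  have h2pi : (0:ℝ) < 2*Real.pi := by positivity
  have hrpow : (2 * Real.pi * u^2) ^ (-(1:ℝ)/2)
      = (Real.sqrt (2*Real.pi))⁻¹ * u⁻¹ := by
    rw [Real.mul_rpow h2pi.le (by positivity)]
    congr 1
    · rw [show (-(1:ℝ)/2) = -(1/2) by ring, Real.rpow_neg h2pi.le, ← Real.sqrt_eq_rpow]
    · rw [show (-(1:ℝ)/2) = -(1/2) by ring, Real.rpow_neg (by positivity),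
        ← Real.sqrt_eq_rpow, Real.sqrt_sq hu'.le]
  have heq : |2*u| • f (u^2) = (2 / Real.sqrt (2*Real.pi)) *
      (Real.exp (-l*u^2) * Real.exp (-z^2/(2*u^2))) := by
    simp only [smul_eq_mul, hf_def]
    rw [hrpow, abs_of_pos (by positivity : (0:ℝ) < 2*u)]
    have hsq : Real.sqrt (2*Real.pi) ≠ 0 := by positivity
    field_simp
  rw [Real.norm_eq_abs, heq, abs_of_nonneg (by positivity)]
  have he1 : Real.exp (-z^2/(2*u^2)) ≤ 1 := by
    apply Real.exp_le_one_iff.mpr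
    exact div_nonpos_of_nonpos_of_nonneg (neg_nonpos.mpr (sq_nonneg z)) (by positivity)
  nlinarith [Real.exp_pos (-l*u^2), Real.sqrt_pos.mpr h2pi,
    mul_le_mul_of_nonneg_left he1 (Real.exp_pos (-l*u^2)).le,
    div_pos two_pos (Real.sqrt_pos.mpr h2pi)]

/-- The resolvent of the Brownian motion killed at `0`: for `λ > 0`, `x ≥ 0` and a
measurable, bounded, integrable `φ` on `(0,∞)`,
`∫₀^∞ e^{-λ t} ∫₀^∞ [g_t(x-y) - g_t(x+y)] φ(y) dy dt
  = (1/√(2λ)) ∫₀^∞ [e^{-|x-y|√(2λ)} - e^{-(x+y)√(2λ)}] φ(y) dy`,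
where `g_t(z) = (2π t)^{-1/2} e^{-z²/(2t)}`. -/
theorem killed_bm_resolvent (l x : ℝ) (hl : 0 < l) (hx : 0 ≤ x)
    (φ : ℝ → ℝ) (hmeas : Measurable φ) (C : ℝ) (hbdd : ∀ y, |φ y| ≤ C)
    (hint : IntegrableOn φ (Set.Ioi 0)) :
    ∫ t in Set.Ioi (0 : ℝ), Real.exp (-l * t) *
        ∫ y in Set.Ioi (0 : ℝ),
          ((2 * Real.pi * t) ^ (-(1 : ℝ) / 2) * Real.exp (-(x - y) ^ 2 / (2 * t))
            - (2 * Real.pi * t) ^ (-(1 : ℝ) / 2) * Real.exp (-(x + y) ^ 2 / (2 * t))) * φ y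
      = (1 / Real.sqrt (2 * l)) *
        ∫ y in Set.Ioi (0 : ℝ),
          (Real.exp (-|x - y| * Real.sqrt (2 * l))
            - Real.exp (-(x + y) * Real.sqrt (2 * l))) * φ y := by
  have hI : ∀ z : ℝ, IntegrableOn (fun t => Real.exp (-l*t) *
      ((2*Real.pi*t)^(-(1:ℝ)/2) * Real.exp (-z^2/(2*t)))) (Ioi 0) :=
    fun z => heat_integrable l z hl
  have hh : IntegrableOn (fun t => Real.exp (-l*t) * (2*Real.pi*t)^(-(1:ℝ)/2)) (Ioi 0) := by
    have := hI 0
    simpa using this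
  set K : ℝ × ℝ → ℝ := fun p =>
    Real.exp (-l * p.1) * (((2*Real.pi*p.1)^(-(1:ℝ)/2) * Real.exp (-(x-p.2)^2/(2*p.1))
      - (2*Real.pi*p.1)^(-(1:ℝ)/2) * Real.exp (-(x+p.2)^2/(2*p.1))) * φ p.2) with hK
  have hrmeas : Measurable fun p : ℝ×ℝ => (2*Real.pi*p.1)^(-(1:ℝ)/2) :=
    meas_rpow_half.comp (measurable_fst.const_mul (2*Real.pi))
  have he1meas : Measurable fun p : ℝ×ℝ => Real.exp (-(x-p.2)^2/(2*p.1)) :=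
    ((((measurable_const.sub measurable_snd).pow_const 2).neg).div
      (measurable_fst.const_mul 2)).exp
  have he2meas : Measurable fun p : ℝ×ℝ => Real.exp (-(x+p.2)^2/(2*p.1)) :=
    ((((measurable_const.add measurable_snd).pow_const 2).neg).div
      (measurable_fst.const_mul 2)).exp
  have hKmeas : Measurable K :=
    ((measurable_fst.const_mul (-l)).exp).mul
      (((hrmeas.mul he1meas).sub (hrmeas.mul he2meas)).mul (hmeas.comp measurable_snd))
  have hKint : Integrable K
      ((volume.restrict (Ioi 0)).prod (volume.restrict (Ioi 0))) := by
    have hB : Integrable (fun p : ℝ×ℝ =>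
        (2*(Real.exp (-l*p.1) * (2*Real.pi*p.1)^(-(1:ℝ)/2))) * |φ p.2|)
        ((volume.restrict (Ioi 0)).prod (volume.restrict (Ioi 0))) :=
      (hh.const_mul 2).mul_prod hint.abs
    apply Integrable.mono' hB hKmeas.aestronglyMeasurable
    rw [Measure.prod_restrict]
    filter_upwards [ae_restrict_mem (measurableSet_Ioi.prod measurableSet_Ioi)] with p hp
    obtain ⟨ht, hy⟩ := hp
    have ht' : (0:ℝ) < p.1 := ht
    have hr : (0:ℝ) ≤ (2*Real.pi*p.1)^(-(1:ℝ)/2) := Real.rpow_nonneg (by positivity) _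
    have he1 : Real.exp (-(x-p.2)^2/(2*p.1)) ≤ 1 := Real.exp_le_one_iff.mpr
      (div_nonpos_of_nonpos_of_nonneg (neg_nonpos.mpr (sq_nonneg _)) (by positivity))
    have he2 : Real.exp (-(x+p.2)^2/(2*p.1)) ≤ 1 := Real.exp_le_one_iff.mpr
      (div_nonpos_of_nonpos_of_nonneg (neg_nonpos.mpr (sq_nonneg _)) (by positivity))
    set r := (2*Real.pi*p.1)^(-(1:ℝ)/2)
    set A := r * Real.exp (-(x-p.2)^2/(2*p.1))
    set B := r * Real.exp (-(x+p.2)^2/(2*p.1))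
    have habs : |A - B| ≤ 2*r := by
      have h3 : |A - B| ≤ |A| + |B| := by
        simpa [sub_eq_add_neg, abs_neg] using abs_add_le A (-B)
      have hA : |A| = A := abs_of_nonneg (mul_nonneg hr (Real.exp_pos _).le)
      have hB' : |B| = B := abs_of_nonneg (mul_nonneg hr (Real.exp_pos _).le)
      rw [hA, hB'] at h3
      have h4 : A ≤ r := by
        have := mul_le_mul_of_nonneg_left he1 hr
        simpa [mul_one] using this
      have h5 : B ≤ r := by
        have := mul_le_mul_of_nonneg_left he2 hr
        simpa [mul_one] using this
      linarith
    rw [Real.norm_eq_abs, hK]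
    simp only
    rw [abs_mul, abs_mul, Real.abs_exp]
    calc Real.exp (-l*p.1) * (|A - B| * |φ p.2|)
        ≤ Real.exp (-l*p.1) * ((2*r) * |φ p.2|) := by
          apply mul_le_mul_of_nonneg_left
            (mul_le_mul_of_nonneg_right habs (abs_nonneg _)) (Real.exp_pos _).le
      _ = 2*(Real.exp (-l*p.1) * r) * |φ p.2| := by ring
  have step1 : (∫ t in Ioi (0:ℝ), Real.exp (-l * t) *
        ∫ y in Ioi (0:ℝ),
          ((2 * Real.pi * t) ^ (-(1 : ℝ) / 2) * Real.exp (-(x - y) ^ 2 / (2 * t))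
            - (2 * Real.pi * t) ^ (-(1 : ℝ) / 2) * Real.exp (-(x + y) ^ 2 / (2 * t))) * φ y)
      = ∫ t in Ioi (0:ℝ), ∫ y in Ioi (0:ℝ), K (t, y) := by
    apply setIntegral_congr_fun measurableSet_Ioi
    intro t ht
    exact (integral_const_mul _ _).symm
  have step2 : (∫ t in Ioi (0:ℝ), ∫ y in Ioi (0:ℝ), K (t, y))
      = ∫ y in Ioi (0:ℝ), ∫ t in Ioi (0:ℝ), K (t, y) :=
    integral_integral_swap hKint
  have hinner : ∀ y ∈ Ioi (0:ℝ), (∫ t in Ioi (0:ℝ), K (t, y))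
      = (1 / Real.sqrt (2*l)) * ((Real.exp (-|x - y| * Real.sqrt (2*l))
          - Real.exp (-(x + y) * Real.sqrt (2*l))) * φ y) := by
    intro y hy
    have hy' : (0:ℝ) < y := hy
    have h1 := heat_laplace l (x - y) hl
    have h2 := heat_laplace l (x + y) hl
    rw [abs_of_nonneg (by linarith : (0:ℝ) ≤ x + y)] at h2
    have hpt : ∀ t : ℝ, K (t, y)
        = (Real.exp (-l*t) * ((2*Real.pi*t)^(-(1:ℝ)/2) * Real.exp (-(x-y)^2/(2*t)))) * φ y
          - (Real.exp (-l*t) * ((2*Real.pi*t)^(-(1:ℝ)/2) * Real.exp (-(x+y)^2/(2*t)))) * φ y := by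
      intro t
      simp only [hK]
      ring
    simp_rw [hpt]
    rw [integral_sub ((hI (x-y)).mul_const _) ((hI (x+y)).mul_const _),
      integral_mul_const, integral_mul_const, h1, h2]
    ring
  rw [step1, step2, setIntegral_congr_fun measurableSet_Ioi hinner, integral_const_mul]
end
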